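/- arXiv:2007.07700 — 7 statements merged into one kernel-verified Lean document; each statement's English description precedes it below -/
import Mathlib

section
/- Let p1, p2, p12 ∈ (0,1) with p12 ≤ 1 - √((1-p1)(1-p2)). Then every point (c1, c2) with c1, c2 ≥ 0 on the segment between (c(p1), 0) and (0, c(p2)), i.e. satisfying c1/c(p1) + c2/c(p2) = 1, satisfies c1 + c2 + (c1²/2) ln(1-p1) + (c2²/2) ln(1-p2) + c1 c2 ln(1-p12) ≥ 0. -/
theorem stmt_3 (p1 p2 p12 : ℝ)
    (hp1 : p1 ∈ Set.Ioo (0 : ℝ) 1) (hp2 : p2 ∈ Set.Ioo (0 : ℝ) 1)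
    (hp12 : p12 ∈ Set.Ioo (0 : ℝ) 1)
    (hthr : p12 ≤ 1 - Real.sqrt ((1 - p1) * (1 - p2)))
    (c1 c2 : ℝ) (hc1 : 0 ≤ c1) (hc2 : 0 ≤ c2)
    (hline : c1 / (-2 / Real.log (1 - p1)) + c2 / (-2 / Real.log (1 - p2)) = 1) :
    0 ≤ c1 + c2 + c1 ^ 2 / 2 * Real.log (1 - p1) + c2 ^ 2 / 2 * Real.log (1 - p2) +
      c1 * c2 * Real.log (1 - p12) := by
  obtain ⟨hp1a, hp1b⟩ := hp1
  obtain ⟨hp2a, hp2b⟩ := hp2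
  obtain ⟨hp12a, hp12b⟩ := hp12
  have h1 : (0:ℝ) < 1 - p1 := by linarith
  have h2 : (0:ℝ) < 1 - p2 := by linarith
  have h12 : (0:ℝ) < 1 - p12 := by linarith
  have L1neg : Real.log (1 - p1) < 0 := Real.log_neg h1 (by linarith)
  have L2neg : Real.log (1 - p2) < 0 := Real.log_neg h2 (by linarith)
  set L1 := Real.log (1 - p1) with hL1
  set L2 := Real.log (1 - p2) with hL2
  set L12 := Real.log (1 - p12) with hL12
  have hsqrt : Real.sqrt ((1 - p1) * (1 - p2)) ≤ 1 - p12 := by linarith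
  have hkey : (L1 + L2) / 2 ≤ L12 := by
    have := Real.log_le_log (Real.sqrt_pos.2 (mul_pos h1 h2)) hsqrt
    rwa [Real.log_sqrt (le_of_lt (mul_pos h1 h2)), Real.log_mul (ne_of_gt h1) (ne_of_gt h2)] at this
  have hlin : c1 * L1 + c2 * L2 = -2 := by
    field_simp at hline
    nlinarith [hline]
  nlinarith [mul_nonneg hc1 hc2, mul_nonneg (mul_nonneg hc1 hc2) (sub_nonneg.2 hkey)]
end

section
/- Let p1, p2, p12 ∈ (0,1) with p12 > 1 - √((1-p1)(1-p2)). Then every point (c1, c2) with c1, c2 > 0 (both strictly positive) lying on the line c1/c(p1) + c2/c(p2) = 1 satisfies c1 + c2 + (c1²/2) ln(1-p1) + (c2²/2) ln(1-p2) + c1 c2 ln(1-p12) < 0; in particular such interior points of the segment between (c(p1),0) and (0,c(p2)) are not in A. -/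
theorem stmt_4 (p1 p2 p12 : ℝ)
    (hp1 : p1 ∈ Set.Ioo (0 : ℝ) 1) (hp2 : p2 ∈ Set.Ioo (0 : ℝ) 1)
    (hp12 : p12 ∈ Set.Ioo (0 : ℝ) 1)
    (hthr : 1 - Real.sqrt ((1 - p1) * (1 - p2)) < p12)
    (c1 c2 : ℝ) (hc1 : 0 < c1) (hc2 : 0 < c2)
    (hline : c1 / (-2 / Real.log (1 - p1)) + c2 / (-2 / Real.log (1 - p2)) = 1) :
    c1 + c2 + c1 ^ 2 / 2 * Real.log (1 - p1) + c2 ^ 2 / 2 * Real.log (1 - p2) +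
      c1 * c2 * Real.log (1 - p12) < 0 := by
  obtain ⟨h1a, h1b⟩ := hp1
  obtain ⟨h2a, h2b⟩ := hp2
  obtain ⟨h3a, h3b⟩ := hp12
  have q1 : (0:ℝ) < 1 - p1 := by linarith
  have q2 : (0:ℝ) < 1 - p2 := by linarith
  have q12 : (0:ℝ) < 1 - p12 := by linarith
  have L1 : Real.log (1 - p1) < 0 := Real.log_neg q1 (by linarith)
  have L2 : Real.log (1 - p2) < 0 := Real.log_neg q2 (by linarith)
  have hL1 : Real.log (1 - p1) ≠ 0 := ne_of_lt L1
  have hL2 : Real.log (1 - p2) ≠ 0 := ne_of_lt L2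
  have hsum : c1 * Real.log (1 - p1) + c2 * Real.log (1 - p2) = -2 := by
    field_simp at hline
    linarith
  have hkey : Real.log (1 - p12) <
      (Real.log (1 - p1) + Real.log (1 - p2)) / 2 := by
    have h := Real.log_lt_log q12 (by linarith :
      (1 - p12) < Real.sqrt ((1 - p1) * (1 - p2)))
    rwa [Real.log_sqrt (by positivity), Real.log_mul (ne_of_gt q1) (ne_of_gt q2)] at h
  have hc12 : 0 < c1 * c2 := mul_pos hc1 hc2
  nlinarith [mul_lt_mul_of_pos_left hkey hc12]
end

section
/- Suppose p_{ij} ≥ 1 - √((1-p_{ii})(1-p_{jj})) for all 1 ≤ i < j ≤ k. Then A ⊆ B, where B := { c ∈ R_{≥0}^k : Σ_{i∈[k]} c_i/c(p_{ii}) ≤ 1 }. -/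
/-!
Put `a i = -log (1 - p i i) / 2 = 1 / c(p i i)`. Taking logarithms, the hypothesis says
`log (1 - p i j) ≤ -(a i + a j)` for all `i, j` (with equality on the diagonal). Hence for `c ≥ 0`,
with `S = ∑ c i` and `T = ∑ c i a i`, the constraint for `I = [k]` gives
`0 ≤ g(c, [k]) ≤ S - S T = S (1 - T)`, so `T ≤ 1` whenever `S > 0`; and `T = 0` when `S = 0`.
-/

open Finset

lemma Real.log_le_of_le_sqrt_mul {w a b : ℝ} (hw : 0 < w) (ha : 0 < a) (hb : 0 < b)
    (h : w ≤ √(a * b)) : Real.log w ≤ (Real.log a + Real.log b) / 2 := by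
  calc Real.log w ≤ Real.log √(a * b) := Real.log_le_log hw h
    _ = (Real.log a + Real.log b) / 2 := by
      rw [Real.log_sqrt (mul_pos ha hb).le, Real.log_mul ha.ne' hb.ne']

lemma Finset.sum_sum_mul_mul_le_of_le_neg_add {ι : Type*} (s : Finset ι) (c a : ι → ℝ)
    (L : ι → ι → ℝ) (hc : ∀ i ∈ s, 0 ≤ c i) (hL : ∀ i ∈ s, ∀ j ∈ s, L i j ≤ -(a i + a j)) :
    ∑ i ∈ s, ∑ j ∈ s, c i * c j * L i j ≤ -(2 * ((∑ i ∈ s, c i) * ∑ i ∈ s, c i * a i)) :=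
  calc ∑ i ∈ s, ∑ j ∈ s, c i * c j * L i j
      ≤ ∑ i ∈ s, ∑ j ∈ s, c i * c j * -(a i + a j) :=
        sum_le_sum fun i hi => sum_le_sum fun j hj =>
          mul_le_mul_of_nonneg_left (hL i hi j hj) (mul_nonneg (hc i hi) (hc j hj))
    _ = -(2 * ((∑ i ∈ s, c i) * ∑ i ∈ s, c i * a i)) := by
        have hleft : ∑ i ∈ s, ∑ j ∈ s, c i * c j * a i =
            (∑ i ∈ s, c i) * ∑ i ∈ s, c i * a i := by
          simp_rw [mul_right_comm (c _) (c _) (a _), ← mul_sum, ← sum_mul, mul_comm]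
        have hright : ∑ i ∈ s, ∑ j ∈ s, c i * c j * a j =
            (∑ i ∈ s, c i) * ∑ i ∈ s, c i * a i := by
          simp_rw [mul_assoc, ← mul_sum, ← sum_mul]
        simp only [mul_neg, mul_add, sum_neg_distrib, sum_add_distrib, hleft, hright]
        ring

theorem stmt_6_general (k : ℕ) (p : Fin k → Fin k → ℝ)
    (hsym : ∀ i j, p i j = p j i) (hp : ∀ i j, p i j ∈ Set.Ioo (0 : ℝ) 1)
    (hthr : ∀ i j : Fin k, i < j →
      1 - Real.sqrt ((1 - p i i) * (1 - p j j)) ≤ p i j) :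
    {c : Fin k → ℝ | (∀ i, 0 ≤ c i) ∧ ∀ I : Finset (Fin k), I.Nonempty →
        0 ≤ (∑ i ∈ I, c i) +
          (1 / 2) * ∑ i ∈ I, ∑ j ∈ I, c i * c j * Real.log (1 - p i j)} ⊆
      {c : Fin k → ℝ | (∀ i, 0 ≤ c i) ∧
        ∑ i, c i / (-2 / Real.log (1 - p i i)) ≤ 1} := by
  rintro c ⟨hc, hA⟩
  refine ⟨hc, ?_⟩
  set a : Fin k → ℝ := fun i => -Real.log (1 - p i i) / 2
  have hpos : ∀ i j, 0 < 1 - p i j := fun i j => sub_pos.2 (hp i j).2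
  have hlt : ∀ i j, i < j → Real.log (1 - p i j) ≤ -(a i + a j) := fun i j hij => by
    have hlog := Real.log_le_of_le_sqrt_mul (hpos i j) (hpos i i) (hpos j j)
      (by linarith [hthr i j hij])
    simp only [a]; linarith
  have hkey : ∀ i ∈ univ, ∀ j ∈ univ, Real.log (1 - p i j) ≤ -(a i + a j) := by
    intro i _ j _
    rcases lt_trichotomy i j with hij | rfl | hij
    · exact hlt i j hij
    · simp only [a]; linarith
    · rw [hsym]; linarith [hlt j i hij]
  have hT : ∑ i, c i / (-2 / Real.log (1 - p i i)) = ∑ i, c i * a i :=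
    sum_congr rfl fun i _ => by rw [div_div_eq_mul_div]; ring
  rw [hT]
  rcases (sum_nonneg fun i _ => hc i : 0 ≤ ∑ i, c i).eq_or_lt with hS | hS
  · have hc0 := (sum_eq_zero_iff_of_nonneg fun i _ => hc i).1 hS.symm
    simp [hc0]
  · have hg := hA univ (nonempty_of_sum_ne_zero hS.ne')
    have hQ := sum_sum_mul_mul_le_of_le_neg_add univ c a _ (fun i _ => hc i) hkey
    nlinarith

theorem stmt_6 (k : ℕ) (hk : 1 ≤ k) (p : Fin k → Fin k → ℝ)
    (hsym : ∀ i j, p i j = p j i) (hp : ∀ i j, p i j ∈ Set.Ioo (0 : ℝ) 1)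
    (hthr : ∀ i j : Fin k, i < j →
      1 - Real.sqrt ((1 - p i i) * (1 - p j j)) ≤ p i j) :
    {c : Fin k → ℝ | (∀ i, 0 ≤ c i) ∧ ∀ I : Finset (Fin k), I.Nonempty →
        0 ≤ (∑ i ∈ I, c i) +
          (1 / 2) * ∑ i ∈ I, ∑ j ∈ I, c i * c j * Real.log (1 - p i j)} ⊆
      {c : Fin k → ℝ | (∀ i, 0 ≤ c i) ∧
        ∑ i, c i / (-2 / Real.log (1 - p i i)) ≤ 1} :=
  stmt_6_general k p hsym hp hthr
end

section
/- Suppose p_{ij} ≥ 1 - √((1-p_{ii})(1-p_{jj})) for all 1 ≤ i < j ≤ k. Then the vectors t_i := c(p_{ii})·e_i (the i-th standard basis vector scaled by c(p_{ii})) all belong to A, and consequently the convex hull of A equals B = { c ∈ R_{≥0}^k : Σ_i c_i/c(p_{ii}) ≤ 1 }. -/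
open Finset

theorem stmt_7 (k : ℕ) (hk : 1 ≤ k) (p : Fin k → Fin k → ℝ)
    (hsym : ∀ i j, p i j = p j i) (hp : ∀ i j, p i j ∈ Set.Ioo (0 : ℝ) 1)
    (hthr : ∀ i j : Fin k, i < j →
      1 - Real.sqrt ((1 - p i i) * (1 - p j j)) ≤ p i j)
    (A : Set (Fin k → ℝ))
    (hA : A = {c : Fin k → ℝ | (∀ i, 0 ≤ c i) ∧ ∀ I : Finset (Fin k), I.Nonempty →
        0 ≤ (∑ i ∈ I, c i) +
          (1 / 2) * ∑ i ∈ I, ∑ j ∈ I, c i * c j * Real.log (1 - p i j)}) :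
    (∀ i : Fin k, Pi.single i (-2 / Real.log (1 - p i i)) ∈ A) ∧
      convexHull ℝ A =
        {c : Fin k → ℝ | (∀ i, 0 ≤ c i) ∧
          ∑ i, c i / (-2 / Real.log (1 - p i i)) ≤ 1} := by
  subst hA
  have hpos : ∀ i j : Fin k, 0 < 1 - p i j := fun i j => by
    have := (hp i j).2; linarith
  have hL : ∀ i : Fin k, Real.log (1 - p i i) < 0 := fun i => by
    have h1 := (hp i i).1
    exact Real.log_neg (hpos i i) (by linarith)
  have hLne : ∀ i, Real.log (1 - p i i) ≠ 0 := fun i => (hL i).ne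
  have hκpos : ∀ i : Fin k, 0 < -2 / Real.log (1 - p i i) := fun i =>
    div_pos_iff.mpr (Or.inr ⟨by norm_num, hL i⟩)
  have hκne : ∀ i : Fin k, -2 / Real.log (1 - p i i) ≠ 0 := fun i => (hκpos i).ne'
  -- Part 1: each t_i belongs to A
  have hmem : ∀ i : Fin k, Pi.single i (-2 / Real.log (1 - p i i)) ∈
      {c : Fin k → ℝ | (∀ i, 0 ≤ c i) ∧ ∀ I : Finset (Fin k), I.Nonempty →
        0 ≤ (∑ i ∈ I, c i) +
          (1 / 2) * ∑ i ∈ I, ∑ j ∈ I, c i * c j * Real.log (1 - p i j)} := by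
    intro i
    refine ⟨fun j => ?_, fun I _ => ?_⟩
    · rcases eq_or_ne j i with h | h
      · subst h; simp [(hκpos j).le]
      · simp [Pi.single_apply, h]
    · set κ := -2 / Real.log (1 - p i i) with hκdef
      set t : Fin k → ℝ := Pi.single i κ with ht
      have h1 : (∑ j ∈ I, t j) = if i ∈ I then κ else 0 := by
        simp [ht, Pi.single_apply, Finset.sum_ite_eq' I i]
      have h2 : (∑ a ∈ I, ∑ b ∈ I, t a * t b * Real.log (1 - p a b))
          = if i ∈ I then κ * κ * Real.log (1 - p i i) else 0 := by
        have inner : ∀ a ∈ I, (∑ b ∈ I, t a * t b * Real.log (1 - p a b))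
            = if a = i then (if i ∈ I then κ * κ * Real.log (1 - p i i) else 0) else 0 := by
          intro a _
          rcases eq_or_ne a i with h | h
          · subst h
            have hterm : ∀ b ∈ I, t a * t b * Real.log (1 - p a b)
                = if b = a then κ * κ * Real.log (1 - p a a) else 0 := by
              intro b _
              rcases eq_or_ne b a with hb | hb
              · subst hb; simp [ht, Pi.single_apply]
              · simp [ht, Pi.single_apply, hb]
            rw [Finset.sum_congr rfl hterm, Finset.sum_ite_eq' I a]
            simp
          · simp [ht, Pi.single_apply, h]
        rw [Finset.sum_congr rfl inner, Finset.sum_ite_eq' I i]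
        split <;> simp [*]
      rw [h1, h2]
      by_cases hiI : i ∈ I
      · simp only [hiI, if_true]
        have hκL : κ * Real.log (1 - p i i) = -2 := by
          rw [hκdef, div_mul_cancel₀ _ (hLne i)]
        have : κ + 1 / 2 * (κ * κ * Real.log (1 - p i i)) = 0 := by
          calc κ + 1 / 2 * (κ * κ * Real.log (1 - p i i))
              = κ + 1 / 2 * (κ * (κ * Real.log (1 - p i i))) := by ring
            _ = 0 := by rw [hκL]; ring
        linarith
      · simp [hiI]
  refine ⟨hmem, ?_⟩
  have hne : Nonempty (Fin k) := ⟨⟨0, hk⟩⟩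
  -- key log inequality
  have hlog : ∀ i j : Fin k, Real.log (1 - p i j) ≤
      (Real.log (1 - p i i) + Real.log (1 - p j j)) / 2 := by
    have base : ∀ i j : Fin k, i < j → Real.log (1 - p i j) ≤
        (Real.log (1 - p i i) + Real.log (1 - p j j)) / 2 := by
      intro i j hij
      have h1 : 1 - p i j ≤ Real.sqrt ((1 - p i i) * (1 - p j j)) := by
        have := hthr i j hij; linarith
      have h2 : Real.log (1 - p i j) ≤ Real.log (Real.sqrt ((1 - p i i) * (1 - p j j))) :=
        Real.log_le_log (hpos i j) h1
      have h3 : Real.log (Real.sqrt ((1 - p i i) * (1 - p j j)))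
          = Real.log ((1 - p i i) * (1 - p j j)) / 2 :=
        Real.log_sqrt (mul_nonneg (hpos i i).le (hpos j j).le)
      have h4 : Real.log ((1 - p i i) * (1 - p j j))
          = Real.log (1 - p i i) + Real.log (1 - p j j) :=
        Real.log_mul (hpos i i).ne' (hpos j j).ne'
      rw [h3, h4] at h2; exact h2
    intro i j
    rcases lt_trichotomy i j with h | h | h
    · exact base i j h
    · subst h; linarith
    · have := base j i h
      rw [hsym i j]; linarith
  -- A ⊆ B
  have hAB : {c : Fin k → ℝ | (∀ i, 0 ≤ c i) ∧ ∀ I : Finset (Fin k), I.Nonempty →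
        0 ≤ (∑ i ∈ I, c i) +
          (1 / 2) * ∑ i ∈ I, ∑ j ∈ I, c i * c j * Real.log (1 - p i j)} ⊆
      {c : Fin k → ℝ | (∀ i, 0 ≤ c i) ∧
          ∑ i, c i / (-2 / Real.log (1 - p i i)) ≤ 1} := by
    rintro c ⟨hc0, hcI⟩
    refine ⟨hc0, ?_⟩
    have hmain := hcI Finset.univ Finset.univ_nonempty
    set S := ∑ i, c i with hS
    set T := ∑ i, c i * Real.log (1 - p i i) with hT
    have hD : (∑ i, ∑ j, c i * c j * Real.log (1 - p i j)) ≤ T * S := by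
      calc (∑ i, ∑ j, c i * c j * Real.log (1 - p i j))
          ≤ ∑ i, ∑ j, c i * c j *
              ((Real.log (1 - p i i) + Real.log (1 - p j j)) / 2) := by
            refine Finset.sum_le_sum fun i _ => Finset.sum_le_sum fun j _ => ?_
            exact mul_le_mul_of_nonneg_left (hlog i j) (mul_nonneg (hc0 i) (hc0 j))
        _ = ∑ i, (c i * Real.log (1 - p i i) / 2 * S + c i / 2 * T) := by
            refine Finset.sum_congr rfl fun i _ => ?_
            rw [hS, hT, Finset.mul_sum, Finset.mul_sum, ← Finset.sum_add_distrib]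
            exact Finset.sum_congr rfl fun j _ => by ring
        _ = T * S := by
            rw [Finset.sum_add_distrib, ← Finset.sum_mul, ← Finset.sum_mul,
              ← Finset.sum_div, ← Finset.sum_div, ← hS, ← hT]
            ring
    have hsum_eq : (∑ i, c i / (-2 / Real.log (1 - p i i))) = -T / 2 := by
      have e1 : (∑ i, c i / (-2 / Real.log (1 - p i i)))
          = (∑ i, c i * Real.log (1 - p i i)) / (-2) := by
        rw [Finset.sum_div]
        exact Finset.sum_congr rfl fun i _ => div_div_eq_mul_div _ _ _
      rw [e1, ← hT]; ring
    rw [hsum_eq]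
    have hS0 : 0 ≤ S := Finset.sum_nonneg fun i _ => hc0 i
    rcases eq_or_lt_of_le hS0 with hS0' | hS0'
    · have hzero : ∀ i : Fin k, c i = 0 := by
        intro i
        have := (Finset.sum_eq_zero_iff_of_nonneg (fun i _ => hc0 i)).mp hS0'.symm
        exact this i (Finset.mem_univ i)
      have : T = 0 := by
        rw [hT]; exact Finset.sum_eq_zero fun i _ => by rw [hzero i]; ring
      rw [this]; norm_num
    · nlinarith
  -- 0 ∈ A
  have h0A : (0 : Fin k → ℝ) ∈ {c : Fin k → ℝ | (∀ i, 0 ≤ c i) ∧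
      ∀ I : Finset (Fin k), I.Nonempty →
        0 ≤ (∑ i ∈ I, c i) +
          (1 / 2) * ∑ i ∈ I, ∑ j ∈ I, c i * c j * Real.log (1 - p i j)} :=
    ⟨fun _ => le_refl 0, fun I _ => by simp⟩
  apply Set.Subset.antisymm
  · refine convexHull_min hAB ?_
    intro x hx y hy a b ha hb hab
    refine ⟨fun i => add_nonneg (mul_nonneg ha (hx.1 i)) (mul_nonneg hb (hy.1 i)), ?_⟩
    have : (∑ i, (a • x + b • y) i / (-2 / Real.log (1 - p i i)))
        = a * (∑ i, x i / (-2 / Real.log (1 - p i i)))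
          + b * (∑ i, y i / (-2 / Real.log (1 - p i i))) := by
      rw [Finset.mul_sum, Finset.mul_sum, ← Finset.sum_add_distrib]
      refine Finset.sum_congr rfl fun i _ => ?_
      simp only [Pi.add_apply, Pi.smul_apply, smul_eq_mul]
      ring
    rw [this]
    calc a * (∑ i, x i / (-2 / Real.log (1 - p i i)))
          + b * (∑ i, y i / (-2 / Real.log (1 - p i i)))
        ≤ a * 1 + b * 1 := by
          gcongr
          · exact hx.2
          · exact hy.2
      _ = 1 := by linarith
  · rintro c ⟨hc0, hcs⟩
    have hw0 : ∀ i : Fin k, 0 ≤ c i / (-2 / Real.log (1 - p i i)) :=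
      fun i => div_nonneg (hc0 i) (hκpos i).le
    set w : Option (Fin k) → ℝ :=
      fun o => o.elim (1 - ∑ i, c i / (-2 / Real.log (1 - p i i)))
        (fun i => c i / (-2 / Real.log (1 - p i i))) with hw
    set z : Option (Fin k) → (Fin k → ℝ) :=
      fun o => o.elim 0 (fun i => Pi.single i (-2 / Real.log (1 - p i i))) with hz
    have key := (convex_convexHull ℝ
        ({c : Fin k → ℝ | (∀ i, 0 ≤ c i) ∧ ∀ I : Finset (Fin k), I.Nonempty →
          0 ≤ (∑ i ∈ I, c i) +
            (1 / 2) * ∑ i ∈ I, ∑ j ∈ I, c i * c j * Real.log (1 - p i j)})).sum_mem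
      (t := (Finset.univ : Finset (Option (Fin k)))) (w := w) (z := z) ?_ ?_ ?_
    · convert key using 1
      rw [Fintype.sum_option]
      simp only [hw, hz, Option.elim]
      rw [smul_zero, zero_add]
      funext j
      rw [Finset.sum_apply]
      have : ∀ i : Fin k,
          ((c i / (-2 / Real.log (1 - p i i))) •
            (Pi.single i (-2 / Real.log (1 - p i i)) : Fin k → ℝ)) j
          = if j = i then c i else 0 := by
        intro i
        simp only [Pi.smul_apply, smul_eq_mul, Pi.single_apply]
        split
        · rw [div_mul_cancel₀ _ (hκne i)]
        · ring
      simp_rw [this]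
      rw [Finset.sum_ite_eq Finset.univ j, if_pos (Finset.mem_univ j)]
    · rintro (_ | i) _
      · simpa [hw] using hcs
      · exact hw0 i
    · rw [Fintype.sum_option]
      simp [hw]
    · rintro (_ | i) _
      · exact subset_convexHull ℝ _ h0A
      · exact subset_convexHull ℝ _ (hmem i)
end

section
/- Suppose p_{ij} ≥ 1 - √((1-p_{ii})(1-p_{jj})) for all 1 ≤ i < j ≤ k, and α ∈ (0,1]^k with Σ α_i = 1. Then c* := max{ |c|_1 : c ∈ conv(A), c = t·α for some t ≥ 0 } equals 1/h where h := Σ_{i∈[k]} α_i/c(p_{ii}). -/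
/-!
Put `ℓ i j = log (1 - p i j)` and `b i = -ℓ i i / 2 = 1 / c(p i i)`. Taking logarithms, the threshold
hypothesis says `ℓ i j ≤ -(b i + b j)`, so for `c ≥ 0` with `S = ∑ c i` and `L = ∑ c i * b i` the
constraint `g(c, [k]) ≥ 0` gives `0 ≤ S + ½ ∑∑ c i c j ℓ i j ≤ S - S L`, i.e. `L ≤ 1`. Hence `conv(A)` lies
in the half-space `∑ c i * b i ≤ 1`, on which `t • α` forces `t ≤ 1 / h`. Conversely the points
`e i / b i` lie in `A` (they make `g` vanish on every `I ∋ i`), and `α / h` is their convex combination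
with weights `α i * b i / h`.
-/

open Finset

theorem log_le_half_add_log_of_le_sqrt {x y z : ℝ} (hx : 0 < x) (hy : 0 < y) (hz : 0 < z)
    (h : z ≤ √(x * y)) : Real.log z ≤ (Real.log x + Real.log y) / 2 := by
  have := Real.log_le_log hz h
  rwa [Real.log_sqrt (mul_pos hx hy).le, Real.log_mul hx.ne' hy.ne'] at this

theorem log_one_sub_le_half_add_log_one_sub {ι : Type*} [LinearOrder ι] {p : ι → ι → ℝ}
    (hsym : ∀ i j, p i j = p j i) (hp : ∀ i j, p i j < 1)
    (hthr : ∀ i j, i < j → 1 - √((1 - p i i) * (1 - p j j)) ≤ p i j) (i j : ι) :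
    Real.log (1 - p i j) ≤ (Real.log (1 - p i i) + Real.log (1 - p j j)) / 2 := by
  have hq : ∀ i j, 0 < 1 - p i j := fun i j => by linarith [hp i j]
  have hlt : ∀ i j, i < j →
      Real.log (1 - p i j) ≤ (Real.log (1 - p i i) + Real.log (1 - p j j)) / 2 :=
    fun i j hij => log_le_half_add_log_of_le_sqrt (hq i i) (hq j j) (hq i j)
      (by linarith [hthr i j hij])
  rcases lt_trichotomy i j with hij | rfl | hij
  · exact hlt i j hij
  · linarith
  · simpa only [hsym i j, add_comm] using hlt j i hij

section Admissible

variable {ι : Type*}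

def admissibleSet (ℓ : ι → ι → ℝ) : Set (ι → ℝ) :=
  {c | (∀ i, 0 ≤ c i) ∧ ∀ I : Finset ι, I.Nonempty →
    0 ≤ (∑ i ∈ I, c i) + (1 / 2) * ∑ i ∈ I, ∑ j ∈ I, c i * c j * ℓ i j}

theorem sum_sum_mul_mul_le_of_le_neg_add [Fintype ι] {ℓ : ι → ι → ℝ} {b c : ι → ℝ}
    (hℓ : ∀ i j, ℓ i j ≤ -(b i + b j)) (hc : ∀ i, 0 ≤ c i) :
    ∑ i, ∑ j, c i * c j * ℓ i j ≤ -2 * (∑ i, c i) * ∑ i, c i * b i :=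
  calc ∑ i, ∑ j, c i * c j * ℓ i j
      ≤ ∑ i, ∑ j, -(c i * b i * c j + c i * (c j * b j)) := by
        gcongr with i _ j _
        nlinarith [hℓ i j, mul_nonneg (hc i) (hc j)]
    _ = -2 * (∑ i, c i) * ∑ i, c i * b i := by
        simp only [sum_neg_distrib, sum_add_distrib, ← sum_mul_sum]
        ring

theorem admissibleSet_subset_halfSpace [Fintype ι] {ℓ : ι → ι → ℝ} {b : ι → ℝ}
    (hℓ : ∀ i j, ℓ i j ≤ -(b i + b j)) :
    admissibleSet ℓ ⊆ {c | ∑ i, c i * b i ≤ 1} := by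
  rintro c ⟨hc, hcI⟩
  have hS : 0 ≤ ∑ i, c i := sum_nonneg fun i _ => hc i
  rcases hS.eq_or_lt with hS0 | hSpos
  · have hzero : ∀ i, c i = 0 := fun i =>
      (sum_eq_zero_iff_of_nonneg fun i _ => hc i).1 hS0.symm i (mem_univ i)
    simp [hzero]
  · have huniv := hcI univ (nonempty_of_sum_ne_zero hSpos.ne')
    have hQ := sum_sum_mul_mul_le_of_le_neg_add hℓ hc
    show ∑ i, c i * b i ≤ 1
    nlinarith

theorem convexHull_admissibleSet_subset_halfSpace [Fintype ι] {ℓ : ι → ι → ℝ} {b : ι → ℝ}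
    (hℓ : ∀ i j, ℓ i j ≤ -(b i + b j)) :
    convexHull ℝ (admissibleSet ℓ) ⊆ {c | ∑ i, c i * b i ≤ 1} :=
  convexHull_min (admissibleSet_subset_halfSpace hℓ) <| convex_halfSpace_le
    ⟨fun x y => by simp [add_mul, sum_add_distrib], fun t x => by simp [mul_sum, mul_assoc]⟩ 1

theorem single_mem_admissibleSet [DecidableEq ι] {ℓ : ι → ι → ℝ} {i : ι} (hℓ : ℓ i i < 0) :
    Pi.single i (-2 / ℓ i i) ∈ admissibleSet ℓ := by
  refine ⟨fun j => ?_, fun I _ => ?_⟩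
  · rcases eq_or_ne j i with rfl | hji
    · simpa using div_nonneg_of_nonpos (by norm_num : (-2 : ℝ) ≤ 0) hℓ.le
    · simp [hji]
  · by_cases hi : i ∈ I
    · have hvanish : -2 / ℓ i i + 2⁻¹ * (-2 / ℓ i i * (-2 / ℓ i i) * ℓ i i) = 0 := by
        field_simp
        ring
      simp [Pi.single_apply, hi, hvanish]
    · simp [Pi.single_apply, hi]

end Admissible

theorem inv_sum_mul_smul_mem_convexHull_single {ι : Type*} [Fintype ι] [DecidableEq ι]
    {w b : ι → ℝ} (hw : ∀ i, 0 ≤ w i) (hb : ∀ i, 0 < b i) (hpos : 0 < ∑ i, w i * b i) :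
    (∑ i, w i * b i)⁻¹ • w ∈ convexHull ℝ (Set.range fun i => Pi.single i (b i)⁻¹) := by
  have hcombination : ∑ i, (w i * b i) • Pi.single i (b i)⁻¹ = w := by
    conv_rhs => rw [← univ_sum_single w]
    refine sum_congr rfl fun i _ => ?_
    rw [← Pi.single_smul, smul_eq_mul, mul_assoc, mul_inv_cancel₀ (hb i).ne', mul_one]
  have hmem := centerMass_mem_convexHull univ (fun i _ => mul_nonneg (hw i) (hb i).le) hpos
    (z := fun i => Pi.single i (b i)⁻¹) (s := Set.range fun i => Pi.single i (b i)⁻¹)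
    (fun i _ => Set.mem_range_self i)
  rwa [centerMass, hcombination] at hmem

theorem isGreatest_sum_of_smul_mem {ι : Type*} [Fintype ι] {K : Set (ι → ℝ)} {α b : ι → ℝ}
    (hαsum : ∑ i, α i = 1) (hpos : 0 < ∑ i, α i * b i)
    (hsub : K ⊆ {c | ∑ i, c i * b i ≤ 1}) (hmem : (∑ i, α i * b i)⁻¹ • α ∈ K) :
    IsGreatest {x : ℝ | ∃ c ∈ K, (∃ t : ℝ, 0 ≤ t ∧ c = t • α) ∧ x = ∑ i, c i}
      (∑ i, α i * b i)⁻¹ := by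
  have hsum_smul : ∀ t : ℝ, ∑ i, (t • α) i = t := fun t => by
    simp [← mul_sum, hαsum]
  refine ⟨⟨_, hmem, ⟨_, (inv_pos.2 hpos).le, rfl⟩, (hsum_smul _).symm⟩, ?_⟩
  rintro x ⟨c, hc, ⟨t, -, rfl⟩, rfl⟩
  have hle : t * ∑ i, α i * b i ≤ 1 := by
    simpa [mul_sum, mul_assoc] using hsub hc
  rwa [hsum_smul, inv_eq_one_div, le_div_iff₀ hpos]

theorem stmt_8_general (k : ℕ) (p : Fin k → Fin k → ℝ)
    (hsym : ∀ i j, p i j = p j i) (hp : ∀ i j, p i j ∈ Set.Ioo (0 : ℝ) 1)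
    (hthr : ∀ i j : Fin k, i < j →
      1 - Real.sqrt ((1 - p i i) * (1 - p j j)) ≤ p i j)
    (α : Fin k → ℝ) (hα : ∀ i, α i ∈ Set.Ioc (0 : ℝ) 1) (hαsum : ∑ i, α i = 1)
    (A : Set (Fin k → ℝ))
    (hA : A = {c : Fin k → ℝ | (∀ i, 0 ≤ c i) ∧ ∀ I : Finset (Fin k), I.Nonempty →
        0 ≤ (∑ i ∈ I, c i) +
          (1 / 2) * ∑ i ∈ I, ∑ j ∈ I, c i * c j * Real.log (1 - p i j)}) :
    IsGreatest
      {x : ℝ | ∃ c ∈ convexHull ℝ A, (∃ t : ℝ, 0 ≤ t ∧ c = t • α) ∧ x = ∑ i, c i}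
      (1 / ∑ i, α i / (-2 / Real.log (1 - p i i))) := by
  set ℓ : Fin k → Fin k → ℝ := fun i j => Real.log (1 - p i j)
  set b : Fin k → ℝ := fun i => -ℓ i i / 2
  replace hA : A = admissibleSet ℓ := hA
  subst hA
  have hℓneg : ∀ i, ℓ i i < 0 := fun i =>
    Real.log_neg (by linarith [(hp i i).2]) (by linarith [(hp i i).1])
  have hℓ : ∀ i j, ℓ i j ≤ -(b i + b j) := fun i j => by
    have := log_one_sub_le_half_add_log_one_sub hsym (fun i j => (hp i j).2) hthr i j
    simp only [b]
    linarith
  have hb : ∀ i, 0 < b i := fun i => by simp only [b]; linarith [hℓneg i]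
  have hpos : 0 < ∑ i, α i * b i :=
    sum_pos (fun i _ => mul_pos (hα i).1 (hb i))
      (nonempty_of_sum_ne_zero (hαsum ▸ one_ne_zero))
  have hvertices : Set.range (fun i => Pi.single i (b i)⁻¹) ⊆ admissibleSet ℓ := by
    rintro _ ⟨i, rfl⟩
    dsimp only
    rw [show (b i)⁻¹ = -2 / ℓ i i by rw [inv_div, div_neg, neg_div]]
    exact single_mem_admissibleSet (hℓneg i)
  have hh : ∑ i, α i / (-2 / ℓ i i) = ∑ i, α i * b i :=
    sum_congr rfl fun i _ => by rw [div_div_eq_mul_div]; ring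
  rw [hh, one_div]
  refine isGreatest_sum_of_smul_mem hαsum hpos ?_ <| convexHull_mono hvertices <|
    inv_sum_mul_smul_mem_convexHull_single (fun i => (hα i).1.le) hb hpos
  exact convexHull_admissibleSet_subset_halfSpace hℓ

theorem stmt_8 (k : ℕ) (hk : 1 ≤ k) (p : Fin k → Fin k → ℝ)
    (hsym : ∀ i j, p i j = p j i) (hp : ∀ i j, p i j ∈ Set.Ioo (0 : ℝ) 1)
    (hthr : ∀ i j : Fin k, i < j →
      1 - Real.sqrt ((1 - p i i) * (1 - p j j)) ≤ p i j)
    (α : Fin k → ℝ) (hα : ∀ i, α i ∈ Set.Ioc (0 : ℝ) 1) (hαsum : ∑ i, α i = 1)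
    (A : Set (Fin k → ℝ))
    (hA : A = {c : Fin k → ℝ | (∀ i, 0 ≤ c i) ∧ ∀ I : Finset (Fin k), I.Nonempty →
        0 ≤ (∑ i ∈ I, c i) +
          (1 / 2) * ∑ i ∈ I, ∑ j ∈ I, c i * c j * Real.log (1 - p i j)}) :
    IsGreatest
      {x : ℝ | ∃ c ∈ convexHull ℝ A, (∃ t : ℝ, 0 ≤ t ∧ c = t • α) ∧ x = ∑ i, c i}
      (1 / ∑ i, α i / (-2 / Real.log (1 - p i i))) :=
  stmt_8_general k p hsym hp hthr α hα hαsum A hA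
end

section
/- Let k ≥ 1, p, q ∈ (0,1) with p ≥ q, and set p_{ii} = p for all i and p_{ij} = q for all i ≠ j. Then the vector c* = (c*/k, ..., c*/k) with c* = -2/((1/k) ln(1-p) + ((k-1)/k) ln(1-q)) belongs to A, i.e. g(c*, I) ≥ 0 for every nonempty I ⊆ [k], with equality when I = [k]. -/
open Finset

theorem stmt_9 (k : ℕ) (hk : 1 ≤ k) (p q : ℝ)
    (hq : 0 < q) (hqp : q ≤ p) (hp : p < 1)
    (P : Fin k → Fin k → ℝ) (hP : ∀ i j, P i j = if i = j then p else q)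
    (cstar : ℝ)
    (hcstar : cstar = -2 / ((1 / k) * Real.log (1 - p) +
      ((k - 1 : ℝ) / k) * Real.log (1 - q))) :
    ((∀ i : Fin k, 0 ≤ (fun _ : Fin k => cstar / k) i) ∧
      ∀ I : Finset (Fin k), I.Nonempty →
        0 ≤ (∑ _i ∈ I, cstar / k) +
          (1 / 2) * ∑ i ∈ I, ∑ j ∈ I, (cstar / k) * (cstar / k) * Real.log (1 - P i j)) ∧
      (∑ _i : Fin k, cstar / k) +
        (1 / 2) * ∑ i : Fin k, ∑ j : Fin k,
          (cstar / k) * (cstar / k) * Real.log (1 - P i j) = 0 := by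
  have hk0 : (0:ℝ) < k := by exact_mod_cast Nat.lt_of_lt_of_le Nat.zero_lt_one hk
  have hk1 : (1:ℝ) ≤ k := by exact_mod_cast hk
  set Lp := Real.log (1 - p) with hLpdef
  set Lq := Real.log (1 - q) with hLqdef
  have hp0 : 0 < p := lt_of_lt_of_le hq hqp
  have hLp : Lp < 0 := Real.log_neg (by linarith) (by linarith)
  have hLq : Lq < 0 := Real.log_neg (by linarith) (by linarith)
  have hLpq : Lp ≤ Lq := Real.log_le_log (by linarith) (by linarith)
  set D := (1 / (k:ℝ)) * Lp + ((k - 1 : ℝ) / k) * Lq with hDdef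
  have hD : D < 0 := by
    rw [hDdef]
    have h1 : (1 / (k:ℝ)) * Lp < 0 :=
      mul_neg_of_pos_of_neg (by positivity) hLp
    have h2 : (((k:ℝ) - 1) / k) * Lq ≤ 0 :=
      mul_nonpos_of_nonneg_of_nonpos (div_nonneg (by linarith) hk0.le) hLq.le
    linarith
  have hDne : D ≠ 0 := ne_of_lt hD
  have hcpos : 0 < cstar := by
    rw [hcstar]
    exact div_pos_of_neg_of_neg (by norm_num) hD
  have hcD : cstar * D = -2 := by
    rw [hcstar]; field_simp
  have hkD : Lp + ((k:ℝ) - 1) * Lq = k * D := by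
    rw [hDdef]; field_simp
  have h3 : cstar / (k:ℝ) * ((k:ℝ) * D) = cstar * D := by field_simp
  -- key sum computation
  have key : ∀ I : Finset (Fin k),
      (∑ i ∈ I, ∑ j ∈ I, (cstar / k) * (cstar / k) * Real.log (1 - P i j))
      = (cstar / k) * (cstar / k) * (I.card * (Lp + ((I.card : ℝ) - 1) * Lq)) := by
    intro I
    have inner : ∀ i ∈ I, (∑ j ∈ I, (cstar / k) * (cstar / k) * Real.log (1 - P i j))
        = (cstar / k) * (cstar / k) * (Lp + ((I.card : ℝ) - 1) * Lq) := by
      intro i hi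
      have : ∀ j ∈ I, (cstar / k) * (cstar / k) * Real.log (1 - P i j)
          = (cstar / k) * (cstar / k) * Lq
            + (if i = j then (cstar / k) * (cstar / k) * (Lp - Lq) else 0) := by
        intro j _
        rw [hP]
        by_cases h : i = j <;> simp [h, hLpdef, hLqdef] <;> ring
      rw [Finset.sum_congr rfl this, Finset.sum_add_distrib, Finset.sum_const,
        Finset.sum_ite_eq I i, if_pos hi, nsmul_eq_mul]
      ring
    rw [Finset.sum_congr rfl inner, Finset.sum_const, nsmul_eq_mul]
    ring
  have main : ∀ I : Finset (Fin k),
      (0:ℝ) ≤ (∑ _i ∈ I, cstar / k) +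
        (1 / 2) * ∑ i ∈ I, ∑ j ∈ I, (cstar / k) * (cstar / k) * Real.log (1 - P i j) := by
    intro I
    rw [key I, Finset.sum_const, nsmul_eq_mul]
    set m : ℝ := (I.card : ℝ) with hm
    have hm0 : 0 ≤ m := by positivity
    have hmk : m ≤ k := by
      have : I.card ≤ k := by simpa using Finset.card_le_card (Finset.subset_univ I)
      rw [hm]; exact_mod_cast this
    have hmono : Lp + ((k:ℝ) - 1) * Lq ≤ Lp + (m - 1) * Lq := by nlinarith
    have hkDval : cstar / k * (Lp + ((k:ℝ) - 1) * Lq) = -2 := by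
      rw [hkD, h3, hcD]
    have hc : 0 ≤ cstar / k := by positivity
    have hge : -2 ≤ cstar / k * (Lp + (m - 1) * Lq) := by
      rw [← hkDval]
      exact mul_le_mul_of_nonneg_left hmono hc
    have expand : m * (cstar / k) +
        1 / 2 * ((cstar / k) * (cstar / k) * (m * (Lp + (m - 1) * Lq)))
        = m * (cstar / k) * (1 + (1/2) * ((cstar / k) * (Lp + (m - 1) * Lq))) := by ring
    rw [expand]
    have hpos : 0 ≤ 1 + (1/2) * ((cstar / k) * (Lp + (m - 1) * Lq)) := by linarith
    exact mul_nonneg (mul_nonneg hm0 hc) hpos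
  refine ⟨⟨fun i => by positivity, fun I _ => main I⟩, ?_⟩
  rw [key (Finset.univ : Finset (Fin k)), Finset.sum_const]
  simp only [Finset.card_univ, Fintype.card_fin, nsmul_eq_mul]
  rw [hkD]
  have e2 : (k:ℝ) * (cstar / k) +
      1 / 2 * (cstar / k * (cstar / k) * ((k:ℝ) * ((k:ℝ) * D)))
      = cstar + 1 / 2 * (cstar * D * cstar) := by field_simp
  rw [e2, hcD]; ring
end

section
/- For k=2 and 0 < p1 ≤ p2 < 1: the set A is convex if and only if p12 ≤ 1 - √((1-p1)(1-p2)). -/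
set_option maxHeartbeats 1600000 in
theorem stmt_16 (p1 p2 p12 : ℝ)
    (hp1 : p1 ∈ Set.Ioo (0 : ℝ) 1) (hp2 : p2 ∈ Set.Ioo (0 : ℝ) 1)
    (hp12 : p12 ∈ Set.Ioo (0 : ℝ) 1) (hple : p1 ≤ p2) :
    Convex ℝ {c : ℝ × ℝ |
        0 ≤ c.1 ∧ c.1 ≤ -2 / Real.log (1 - p1) ∧
        0 ≤ c.2 ∧ c.2 ≤ -2 / Real.log (1 - p2) ∧
        0 ≤ c.1 + c.2 + c.1 ^ 2 / 2 * Real.log (1 - p1) +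
          c.2 ^ 2 / 2 * Real.log (1 - p2) + c.1 * c.2 * Real.log (1 - p12)} ↔
      p12 ≤ 1 - Real.sqrt ((1 - p1) * (1 - p2)) := by
  obtain ⟨hp1a, hp1b⟩ := hp1
  obtain ⟨hp2a, hp2b⟩ := hp2
  obtain ⟨hp12a, hp12b⟩ := hp12
  have hq1 : (0:ℝ) < 1 - p1 := by linarith
  have hq2 : (0:ℝ) < 1 - p2 := by linarith
  have hq12 : (0:ℝ) < 1 - p12 := by linarith
  set L1 := Real.log (1 - p1) with hL1def
  set L2 := Real.log (1 - p2) with hL2def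
  set L12 := Real.log (1 - p12) with hL12def
  have hL1 : L1 < 0 := Real.log_neg hq1 (by linarith)
  have hL2 : L2 < 0 := Real.log_neg hq2 (by linarith)
  have hL12 : L12 < 0 := Real.log_neg hq12 (by linarith)
  have hL1' : L1 ≠ 0 := ne_of_lt hL1
  have hL2' : L2 ≠ 0 := ne_of_lt hL2
  have hexp : Real.exp ((L1 + L2) / 2) ^ 2 = (1 - p1) * (1 - p2) := by
    rw [sq, ← Real.exp_add, show (L1 + L2) / 2 + (L1 + L2) / 2 = L1 + L2 by ring,
      Real.exp_add, hL1def, hL2def, Real.exp_log hq1, Real.exp_log hq2]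
  have hsqrt : Real.sqrt ((1 - p1) * (1 - p2)) = Real.exp ((L1 + L2) / 2) := by
    rw [← hexp, Real.sqrt_sq (Real.exp_nonneg _)]
  have hiff : (p12 ≤ 1 - Real.sqrt ((1 - p1) * (1 - p2))) ↔ (L1 + L2) / 2 ≤ L12 := by
    rw [hsqrt]
    constructor
    · intro h
      have h2 : Real.exp ((L1 + L2) / 2) ≤ Real.exp L12 := by
        rw [hL12def, Real.exp_log hq12]; linarith
      exact Real.exp_le_exp.mp h2
    · intro h
      have h2 := Real.exp_le_exp.mpr h
      rw [hL12def, Real.exp_log hq12] at h2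
      linarith
  rw [hiff]
  constructor
  · intro hconv
    have hP : ((-2 / L1, 0) : ℝ × ℝ) ∈ {c : ℝ × ℝ |
        0 ≤ c.1 ∧ c.1 ≤ -2 / L1 ∧ 0 ≤ c.2 ∧ c.2 ≤ -2 / L2 ∧
        0 ≤ c.1 + c.2 + c.1 ^ 2 / 2 * L1 + c.2 ^ 2 / 2 * L2 + c.1 * c.2 * L12} := by
      refine ⟨?_, le_refl _, le_refl _, ?_, ?_⟩
      · rw [div_nonneg_iff]; right; exact ⟨by norm_num, hL1.le⟩
      · rw [div_nonneg_iff]; right; exact ⟨by norm_num, hL2.le⟩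
      · have h : (-2 / L1 : ℝ) + 0 + (-2 / L1) ^ 2 / 2 * L1 + (0:ℝ) ^ 2 / 2 * L2 +
            (-2 / L1) * 0 * L12 = 0 := by field_simp; ring
        exact le_of_eq h.symm
    have hQ : ((0, -2 / L2) : ℝ × ℝ) ∈ {c : ℝ × ℝ |
        0 ≤ c.1 ∧ c.1 ≤ -2 / L1 ∧ 0 ≤ c.2 ∧ c.2 ≤ -2 / L2 ∧
        0 ≤ c.1 + c.2 + c.1 ^ 2 / 2 * L1 + c.2 ^ 2 / 2 * L2 + c.1 * c.2 * L12} := by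
      refine ⟨le_refl _, ?_, ?_, le_refl _, ?_⟩
      · rw [div_nonneg_iff]; right; exact ⟨by norm_num, hL1.le⟩
      · rw [div_nonneg_iff]; right; exact ⟨by norm_num, hL2.le⟩
      · have h : (0:ℝ) + -2 / L2 + (0:ℝ) ^ 2 / 2 * L1 + (-2 / L2) ^ 2 / 2 * L2 +
            0 * (-2 / L2) * L12 = 0 := by field_simp; ring
        exact le_of_eq h.symm
    have hmid := hconv hP hQ (by norm_num : (0:ℝ) ≤ 1/2) (by norm_num : (0:ℝ) ≤ 1/2)
      (by norm_num : (1:ℝ)/2 + 1/2 = 1)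
    have hpt : (1/2 : ℝ) • ((-2 / L1, 0) : ℝ × ℝ) + (1/2 : ℝ) • ((0, -2 / L2) : ℝ × ℝ)
        = ((-1 / L1, -1 / L2) : ℝ × ℝ) := by
      simp only [Prod.smul_mk, smul_eq_mul, Prod.mk_add_mk, Prod.mk.injEq]
      constructor <;> ring
    rw [hpt] at hmid
    simp only [Set.mem_setOf_eq] at hmid
    have h5 := hmid.2.2.2.2
    have hL1L2 : 0 < L1 * L2 := mul_pos_of_neg_of_neg hL1 hL2
    have hkey : L1 * L2 * (-1 / L1 + -1 / L2 + (-1 / L1) ^ 2 / 2 * L1 +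
        (-1 / L2) ^ 2 / 2 * L2 + (-1 / L1) * (-1 / L2) * L12) = L12 - (L1 + L2) / 2 := by
      field_simp
      ring
    have hnn := mul_nonneg hL1L2.le h5
    linarith [hkey, hnn]
  · intro hle
    intro x hx y hy s t hs ht hst
    obtain ⟨x1, x2⟩ := x
    obtain ⟨y1, y2⟩ := y
    have hx1 : 0 ≤ x1 := hx.1
    have hx1' : x1 ≤ -2 / L1 := hx.2.1
    have hx2 : 0 ≤ x2 := hx.2.2.1
    have hx2' : x2 ≤ -2 / L2 := hx.2.2.2.1
    have hFx : 0 ≤ x1 + x2 + x1 ^ 2 / 2 * L1 + x2 ^ 2 / 2 * L2 + x1 * x2 * L12 :=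
      hx.2.2.2.2
    have hy1 : 0 ≤ y1 := hy.1
    have hy1' : y1 ≤ -2 / L1 := hy.2.1
    have hy2 : 0 ≤ y2 := hy.2.2.1
    have hy2' : y2 ≤ -2 / L2 := hy.2.2.2.1
    have hFy : 0 ≤ y1 + y2 + y1 ^ 2 / 2 * L1 + y2 ^ 2 / 2 * L2 + y1 * y2 * L12 :=
      hy.2.2.2.2
    have hseq : s = 1 - t := by linarith
    subst hseq
    have ht' : t ≤ 1 := by linarith
    have hz1 : ((1 - t) • ((x1, x2) : ℝ × ℝ) + t • ((y1, y2) : ℝ × ℝ)).1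
        = (1 - t) * x1 + t * y1 := by
      simp [Prod.smul_mk, Prod.mk_add_mk]
    have hz2 : ((1 - t) • ((x1, x2) : ℝ × ℝ) + t • ((y1, y2) : ℝ × ℝ)).2
        = (1 - t) * x2 + t * y2 := by
      simp [Prod.smul_mk, Prod.mk_add_mk]
    have hC1 : (1 - t) * x1 + t * y1 ≤ -2 / L1 := by
      have h1 := mul_le_mul_of_nonneg_left hx1' hs
      have h2 := mul_le_mul_of_nonneg_left hy1' ht
      have h3 : (1 - t) * (-2 / L1) + t * (-2 / L1) = -2 / L1 := by ring
      linarith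
    have hC2 : (1 - t) * x2 + t * y2 ≤ -2 / L2 := by
      have h1 := mul_le_mul_of_nonneg_left hx2' hs
      have h2 := mul_le_mul_of_nonneg_left hy2' ht
      have h3 : (1 - t) * (-2 / L2) + t * (-2 / L2) = -2 / L2 := by ring
      linarith
    refine ⟨?_, ?_, ?_, ?_, ?_⟩
    · rw [hz1]
      exact add_nonneg (mul_nonneg hs hx1) (mul_nonneg ht hy1)
    · rw [hz1]; exact hC1
    · rw [hz2]
      exact add_nonneg (mul_nonneg hs hx2) (mul_nonneg ht hy2)
    · rw [hz2]; exact hC2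
    · rw [hz1, hz2]
      have he : 0 ≤ L12 - (L1 + L2) / 2 := by linarith
      clear hz1 hz2 hC1 hC2 hx1' hx2' hy1' hy2' hexp hsqrt hiff hq1 hq2 hq12
      clear hp1a hp1b hp2a hp2b hp12a hp12b hple hL1' hL2' hle hL12
      rcases le_or_gt (x1 + x2) 0 with hsx | hsx
      · have hx10 : x1 = 0 := by linarith
        have hx20 : x2 = 0 := by linarith
        subst hx10; subst hx20
        nlinarith [mul_nonneg (mul_nonneg ht ht) hFy,
          mul_nonneg (mul_nonneg ht hs) (add_nonneg hy1 hy2)]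
      rcases le_or_gt (y1 + y2) 0 with hsy | hsy
      · have hy10 : y1 = 0 := by linarith
        have hy20 : y2 = 0 := by linarith
        subst hy10; subst hy20
        nlinarith [mul_nonneg (mul_nonneg hs hs) hFx,
          mul_nonneg (mul_nonneg hs ht) (add_nonneg hx1 hx2)]
      · set z1 := (1 - t) * x1 + t * y1 with hz1def
        set z2 := (1 - t) * x2 + t * y2 with hz2def
        have hznn : 0 ≤ z1 + z2 := by
          have := add_nonneg (add_nonneg (mul_nonneg hs hx1) (mul_nonneg ht hy1))
            (add_nonneg (mul_nonneg hs hx2) (mul_nonneg ht hy2))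
          rw [hz1def, hz2def]; linarith
        have hid : 2 * (z1 + z2 + z1 ^ 2 / 2 * L1 + z2 ^ 2 / 2 * L2 + z1 * z2 * L12)
              * (x1 + x2) * (y1 + y2)
            = (1 - t) * (z1 + z2) * (y1 + y2)
                * (2 * (x1 + x2 + x1 ^ 2 / 2 * L1 + x2 ^ 2 / 2 * L2 + x1 * x2 * L12))
              + t * (z1 + z2) * (x1 + x2)
                * (2 * (y1 + y2 + y1 ^ 2 / 2 * L1 + y2 ^ 2 / 2 * L2 + y1 * y2 * L12))
              + 2 * (L12 - (L1 + L2) / 2) * (1 - t) * t * (x1 * y2 - x2 * y1) ^ 2 := by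
          rw [hz1def, hz2def]; ring
        have h1 : 0 ≤ (1 - t) * (z1 + z2) * (y1 + y2)
            * (2 * (x1 + x2 + x1 ^ 2 / 2 * L1 + x2 ^ 2 / 2 * L2 + x1 * x2 * L12)) :=
          mul_nonneg (mul_nonneg (mul_nonneg hs hznn) hsy.le) (by linarith)
        have h2 : 0 ≤ t * (z1 + z2) * (x1 + x2)
            * (2 * (y1 + y2 + y1 ^ 2 / 2 * L1 + y2 ^ 2 / 2 * L2 + y1 * y2 * L12)) :=
          mul_nonneg (mul_nonneg (mul_nonneg ht hznn) hsx.le) (by linarith)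
        have h3 : 0 ≤ 2 * (L12 - (L1 + L2) / 2) * (1 - t) * t * (x1 * y2 - x2 * y1) ^ 2 :=
          mul_nonneg (mul_nonneg (mul_nonneg (by linarith) hs) ht) (sq_nonneg _)
        have hsum : 0 ≤ 2 * (z1 + z2 + z1 ^ 2 / 2 * L1 + z2 ^ 2 / 2 * L2 + z1 * z2 * L12)
            * (x1 + x2) * (y1 + y2) := by rw [hid]; linarith
        nlinarith [mul_pos hsx hsy, hsum]
end
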